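/- Let m be a positive integer, D a strongly connected digraph, and Z₁, Z₂ ⊆ A(D). If μ(D,Z₁,Z₂) ≥ 2^{2m+1}, then there exists a chain of vertex sets V(D) = S₀ ⊇ S₁ ⊇ ⋯ ⊇ S_m such that for every i ∈ [m]: (i) D[S_i] is strongly connected, (ii) μ(D[S_i],Z₁,Z₂) ≥ μ(D,Z₁,Z₂)/4^i, and (iii) for every pair (x,y) of distinct vertices of S_m there is a directed S_m-path from x to y in D[S_m ∪ (S_{i−1}∖S_i)]. -/

import Mathlib

variable {V : Type}

/-- The arcs of a directed cycle given by its (cyclic) vertex list. -/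
def cycleArcs (vs : List V) : List (V × V) := vs.zip (vs.rotate 1)

/-- The arcs of a directed path given by its vertex list. -/
def pathArcs (vs : List V) : List (V × V) := vs.zip vs.tail

/-- `vs` is the vertex list of a directed cycle in the digraph `D`. -/
def IsDicycle (D : V → V → Prop) (vs : List V) : Prop :=
  vs ≠ [] ∧ vs.Nodup ∧ ∀ p ∈ cycleArcs vs, D p.1 p.2

/-- The number of (distinct) arcs of `l` that lie in `Z`. -/
noncomputable def arcCount (l : List (V × V)) (Z : Set (V × V)) : ℕ :=
  Nat.card {a : V × V // a ∈ l ∧ a ∈ Z}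

/-- The directed cycle `vs` is `(Z1, Z2)`-unbalanced. -/
def Unbalanced (Z1 Z2 : Set (V × V)) (vs : List V) : Prop :=
  arcCount (cycleArcs vs) Z1 ≠ arcCount (cycleArcs vs) Z2

/-- The induced subdigraph `D[S]` contains no `(Z1,Z2)`-unbalanced directed cycle. -/
def NoUnbCycle (D : V → V → Prop) (Z1 Z2 : Set (V × V)) (S : Set V) : Prop :=
  ∀ vs : List V, IsDicycle D vs → (∀ v ∈ vs, v ∈ S) → ¬ Unbalanced Z1 Z2 vs

/-- `mu D Z1 Z2 S` is the `(Z1,Z2)`-unbalanced dichromatic number of the induced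
subdigraph `D[S]`: the least number of parts of a partition of `S` each of whose
parts induces no `(Z1,Z2)`-unbalanced directed cycle. -/
noncomputable def mu (D : V → V → Prop) (Z1 Z2 : Set (V × V)) (S : Set V) : ℕ :=
  sInf {k | ∃ c : V → Fin k, ∀ i : Fin k, NoUnbCycle D Z1 Z2 (S ∩ {v | c v = i})}

/-- The adjacency relation of the induced subdigraph `D[S]`. -/
def inducedRel (D : V → V → Prop) (S : Set V) : V → V → Prop :=
  fun u v => D u v ∧ u ∈ S ∧ v ∈ S

/-- The induced subdigraph `D[S]` is strongly connected. -/
def StronglyConnectedOn (D : V → V → Prop) (S : Set V) : Prop :=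
  ∀ u ∈ S, ∀ v ∈ S, Relation.ReflTransGen (inducedRel D S) u v

/-- `H` is (the vertex set of) a strong component of the induced subdigraph `D[S]`. -/
def IsStrongComponent (D : V → V → Prop) (S H : Set V) : Prop :=
  H ⊆ S ∧ H.Nonempty ∧ StronglyConnectedOn D H ∧
    ∀ H', H ⊆ H' → H' ⊆ S → StronglyConnectedOn D H' → H' = H

/-- `vs` is the vertex list of a directed path in `D`. -/
def IsDipath (D : V → V → Prop) (vs : List V) : Prop :=
  vs.Nodup ∧ vs.Chain' D

/-- `vs` is a directed path in `D` from `x` to `y`. -/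
def IsDipathFromTo (D : V → V → Prop) (vs : List V) (x y : V) : Prop :=
  IsDipath D vs ∧ vs.head? = some x ∧ vs.getLast? = some y

/-- The internal vertices of a path given by its vertex list. -/
def internalVerts (vs : List V) : List V := vs.tail.dropLast

/-- `vs` is a directed `X`-path in `D` from `x` to `y`: a directed path whose two
endpoints are distinct vertices of `X` and whose internal vertices avoid `X`. -/
def IsXPath (D : V → V → Prop) (X : Set V) (vs : List V) (x y : V) : Prop :=
  IsDipathFromTo D vs x y ∧ x ∈ X ∧ y ∈ X ∧ x ≠ y ∧ ∀ v ∈ internalVerts vs, v ∉ X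
section Aux
variable {D : V → V → Prop} {Z1 Z2 : Set (V × V)}

/-- The set of admissible numbers of colors. -/
def muSet (D : V → V → Prop) (Z1 Z2 : Set (V × V)) (S : Set V) : Set ℕ :=
  {k | ∃ c : V → Fin k, ∀ i : Fin k, NoUnbCycle D Z1 Z2 (S ∩ {v | c v = i})}

lemma mu_eq (S : Set V) : mu D Z1 Z2 S = sInf (muSet D Z1 Z2 S) := rfl

lemma noUnb_anti {S T : Set V} (h : S ⊆ T) (hT : NoUnbCycle D Z1 Z2 T) :
    NoUnbCycle D Z1 Z2 S := fun vs hc hm => hT vs hc (fun v hv => h (hm v hv))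

lemma muSet_anti {S T : Set V} (h : S ⊆ T) : muSet D Z1 Z2 T ⊆ muSet D Z1 Z2 S := by
  rintro k ⟨c, hc⟩
  exact ⟨c, fun i => noUnb_anti (Set.inter_subset_inter_left _ h) (hc i)⟩

lemma muSet_upward {S : Set V} {k k' : ℕ} (hk : k ∈ muSet D Z1 Z2 S) (hkk : k ≤ k') :
    k' ∈ muSet D Z1 Z2 S := by
  obtain ⟨c, hc⟩ := hk
  refine ⟨fun v => Fin.castLE hkk (c v), fun i' vs hcyc hmem hunb => ?_⟩
  obtain ⟨v₀, hv₀⟩ := List.exists_mem_of_ne_nil vs hcyc.1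
  refine hc (c v₀) vs hcyc (fun v hv => ?_) hunb
  have h1 := (hmem v hv).2
  have h2 := (hmem v₀ hv₀).2
  simp only [Set.mem_setOf_eq] at h1 h2
  exact ⟨(hmem v hv).1, by
    simp only [Set.mem_setOf_eq]
    exact Fin.castLE_injective hkk (h1.trans h2.symm)⟩

lemma mu_le {S : Set V} {k : ℕ} (hk : k ∈ muSet D Z1 Z2 S) : mu D Z1 Z2 S ≤ k :=
  Nat.sInf_le hk

lemma mu_mem {S : Set V} (hne : (muSet D Z1 Z2 S).Nonempty) :
    mu D Z1 Z2 S ∈ muSet D Z1 Z2 S := Nat.sInf_mem hne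

lemma exists_coloring {S : Set V} {K : ℕ} (hne : (muSet D Z1 Z2 S).Nonempty)
    (h : mu D Z1 Z2 S ≤ K) :
    ∃ c : V → Fin K, ∀ i : Fin K, NoUnbCycle D Z1 Z2 (S ∩ {v | c v = i}) :=
  muSet_upward (mu_mem hne) h

lemma mu_mono {S T : Set V} (h : S ⊆ T) (hne : (muSet D Z1 Z2 T).Nonempty) :
    mu D Z1 Z2 S ≤ mu D Z1 Z2 T :=
  mu_le (muSet_anti h (mu_mem hne))

lemma mu_pos [Nonempty V] {S : Set V} (hne : (muSet D Z1 Z2 S).Nonempty) :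
    1 ≤ mu D Z1 Z2 S := by
  rcases Nat.eq_zero_or_pos (mu D Z1 Z2 S) with h | h
  · obtain ⟨c, -⟩ := mu_mem hne
    rw [h] at c
    exact (c (Classical.arbitrary V)).elim0
  · exact h

lemma one_mem_muSet_empty : (1 : ℕ) ∈ muSet D Z1 Z2 (∅ : Set V) := by
  refine ⟨fun _ => 0, fun i vs hcyc hmem hunb => ?_⟩
  obtain ⟨v₀, hv₀⟩ := List.exists_mem_of_ne_nil vs hcyc.1
  exact absurd (hmem v₀ hv₀).1 (Set.notMem_empty v₀)

lemma mu_empty [Nonempty V] : mu D Z1 Z2 (∅ : Set V) = 1 :=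
  le_antisymm (mu_le one_mem_muSet_empty) (mu_pos ⟨1, one_mem_muSet_empty⟩)

end Aux
section Walks
variable {R : V → V → Prop}

/-- Walks of length exactly `n`. -/
def stepN (R : V → V → Prop) : ℕ → V → V → Prop
  | 0 => Eq
  | n+1 => fun a c => ∃ b, R a b ∧ stepN R n b c

lemma stepN_zero {a b : V} : stepN R 0 a b ↔ a = b := Iff.rfl

lemma stepN_succ {n : ℕ} {a c : V} : stepN R (n+1) a c ↔ ∃ b, R a b ∧ stepN R n b c := Iff.rfl

lemma stepN_snoc {n : ℕ} {a b c : V} (h : stepN R n a b) (hr : R b c) :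
    stepN R (n+1) a c := by
  induction n generalizing a with
  | zero => rw [stepN_zero] at h; subst h; exact ⟨c, hr, rfl⟩
  | succ k ih => obtain ⟨d, hd, hdb⟩ := h; exact ⟨d, hd, ih hdb⟩

lemma stepN_last {n : ℕ} {a c : V} (h : stepN R (n+1) a c) :
    ∃ b, stepN R n a b ∧ R b c := by
  induction n generalizing a with
  | zero => obtain ⟨b, hb, heq⟩ := h; rw [stepN_zero] at heq; subst heq; exact ⟨a, rfl, hb⟩
  | succ k ih =>
    obtain ⟨d, hd, hdc⟩ := h
    obtain ⟨b, hb, hbc⟩ := ih hdc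
    exact ⟨b, ⟨d, hd, hb⟩, hbc⟩

lemma rtg_iff_stepN {a b : V} :
    Relation.ReflTransGen R a b ↔ ∃ n, stepN R n a b := by
  constructor
  · intro h
    induction h with
    | refl => exact ⟨0, rfl⟩
    | tail _ hr ih => obtain ⟨n, hn⟩ := ih; exact ⟨n+1, stepN_snoc hn hr⟩
  · rintro ⟨n, hn⟩
    induction n generalizing a with
    | zero => rw [stepN_zero] at hn; rw [hn]
    | succ k ih =>
      obtain ⟨c, hc, hcb⟩ := hn
      exact Relation.ReflTransGen.head hc (ih hcb)

lemma stepN_flip {n : ℕ} {a b : V} : stepN (flip R) n a b ↔ stepN R n b a := by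
  induction n generalizing a with
  | zero => constructor <;> (intro h; exact h.symm)
  | succ k ih =>
    constructor
    · rintro ⟨c, hc, hcb⟩
      exact stepN_snoc (ih.mp hcb) hc
    · intro h
      obtain ⟨c, hc, hcb⟩ := stepN_last h
      exact ⟨c, hcb, ih.mpr hc⟩

lemma rtg_flip {a b : V} :
    Relation.ReflTransGen (flip R) a b ↔ Relation.ReflTransGen R b a := by
  rw [rtg_iff_stepN, rtg_iff_stepN]
  exact exists_congr (fun n => stepN_flip)

/-- Distance from `v` to `r` with respect to `R`. -/
noncomputable def distTo (R : V → V → Prop) (r v : V) : ℕ := sInf {n | stepN R n v r}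

/-- Distance from `r` to `v` with respect to `R`. -/
noncomputable def distFrom (R : V → V → Prop) (r v : V) : ℕ := sInf {n | stepN R n r v}

lemma distTo_flip (r v : V) : distTo (flip R) r v = distFrom R r v := by
  unfold distTo distFrom
  congr 1
  ext n
  exact stepN_flip

lemma distTo_spec {r v : V} (h : Relation.ReflTransGen R v r) :
    stepN R (distTo R r v) v r :=
  Nat.sInf_mem (rtg_iff_stepN.mp h)

lemma distTo_le {r v : V} {n : ℕ} (h : stepN R n v r) : distTo R r v ≤ n := Nat.sInf_le h

lemma distTo_eq_zero {r v : V} (h : distTo R r v = 0) (hr : Relation.ReflTransGen R v r) :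
    v = r := by
  have := distTo_spec hr
  rw [h] at this
  exact this

lemma distTo_self (r : V) : distTo R r r = 0 := Nat.le_zero.mp (distTo_le rfl)

lemma distTo_step {r u v : V} (hv : Relation.ReflTransGen R v r) (h : R u v) :
    distTo R r u ≤ distTo R r v + 1 :=
  distTo_le ⟨v, h, distTo_spec hv⟩

lemma distFrom_spec {r v : V} (h : Relation.ReflTransGen R r v) :
    stepN R (distFrom R r v) r v :=
  Nat.sInf_mem (rtg_iff_stepN.mp h)

lemma distFrom_le {r v : V} {n : ℕ} (h : stepN R n r v) : distFrom R r v ≤ n := Nat.sInf_le h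

lemma distFrom_eq_zero {r v : V} (h : distFrom R r v = 0) (hr : Relation.ReflTransGen R r v) :
    r = v := by
  have := distFrom_spec hr
  rw [h] at this
  exact this

lemma distFrom_self (r : V) : distFrom R r r = 0 := Nat.le_zero.mp (distFrom_le rfl)

lemma distFrom_step {r u v : V} (hu : Relation.ReflTransGen R r u) (h : R u v) :
    distFrom R r v ≤ distFrom R r u + 1 :=
  distFrom_le (stepN_snoc (distFrom_spec hu) h)

/-- A walk from `v` to `r` in which every vertex other than `v` is strictly
closer to `r` than `v` is. -/
lemma exists_walk_to {r v : V} (h : Relation.ReflTransGen R v r) :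
    ∃ l : List V, l ≠ [] ∧ l.Chain' R ∧ l.head? = some v ∧ l.getLast? = some r ∧
      ∀ w ∈ l, w = v ∨ distTo R r w < distTo R r v := by
  generalize hd : distTo R r v = d
  induction d using Nat.strong_induction_on generalizing v with
  | _ d ih =>
    have hs := distTo_spec h
    rw [hd] at hs
    match d, hs with
    | 0, hs =>
      rw [stepN_zero] at hs
      subst hs
      exact ⟨[v], by simp, List.isChain_singleton v, by simp, by simp, by simp⟩
    | e+1, hs =>
      obtain ⟨u, hvu, hur⟩ := hs
      have hru : Relation.ReflTransGen R u r := rtg_iff_stepN.mpr ⟨e, hur⟩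
      have hue : distTo R r u ≤ e := distTo_le hur
      obtain ⟨l, hne, hch, hhd, hlast, hmem⟩ := ih (distTo R r u) (by omega) hru rfl
      refine ⟨v :: l, by simp, ?_, by simp, ?_, ?_⟩
      · unfold List.Chain'
        rw [List.isChain_cons]
        refine ⟨fun b hb => ?_, hch⟩
        rw [hhd, Option.mem_def, Option.some.injEq] at hb
        exact hb ▸ hvu
      · cases l with
        | nil => exact absurd rfl hne
        | cons x t => rw [List.getLast?_cons_cons]; exact hlast
      · intro w hw
        rcases List.mem_cons.mp hw with rfl | hw
        · exact Or.inl rfl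
        · refine Or.inr ?_
          rcases hmem w hw with rfl | hlt
          · omega
          · omega

/-- A walk from `r` to `v` in which every vertex other than `v` is strictly
closer to `r` than `v` is. -/
lemma exists_walk_from {r v : V} (h : Relation.ReflTransGen R r v) :
    ∃ l : List V, l ≠ [] ∧ l.Chain' R ∧ l.head? = some r ∧ l.getLast? = some v ∧
      ∀ w ∈ l, w = v ∨ distFrom R r w < distFrom R r v := by
  obtain ⟨l, hne, hch, hhd, hlast, hmem⟩ :=
    exists_walk_to (R := flip R) (rtg_flip.mpr h)
  refine ⟨l.reverse, by simpa using hne, ?_, ?_, ?_, ?_⟩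
  · unfold List.Chain' at hch ⊢
    rw [List.isChain_reverse]
    exact hch.imp (fun a b hab => hab)
  · rw [List.head?_reverse]
    exact hlast
  · rw [List.getLast?_reverse]
    exact hhd
  · intro w hw
    rw [List.mem_reverse] at hw
    simpa only [distTo_flip] using hmem w hw

end Walks
section Dedup
variable {R : V → V → Prop}

lemma exists_path_of_walk_aux {x y : V} :
    ∀ (n : ℕ) (l : List V), l.length ≤ n → l.Chain' R → l.head? = some x →
      l.getLast? = some y →
    ∃ p : List V, p.Nodup ∧ p.Chain' R ∧ p.head? = some x ∧ p.getLast? = some y ∧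
      ∀ v ∈ p, v ∈ l := by
  intro n
  induction n with
  | zero =>
    intro l hlen hch hhd hlast
    rw [Nat.le_zero, List.length_eq_zero_iff] at hlen
    subst hlen
    simp at hhd
  | succ n ih =>
    intro l hlen hch hhd hlast
    by_cases hnd : l.Nodup
    · exact ⟨l, hnd, hch, hhd, hlast, fun v hv => hv⟩
    · rw [List.nodup_iff_injective_get] at hnd
      rw [Function.not_injective_iff] at hnd
      obtain ⟨a, b, hab, hne⟩ := hnd
      -- wlog i < j
      obtain ⟨i, j, hilen, hjlen, hij, hgij⟩ :
          ∃ (i j : ℕ) (hi : i < l.length) (hj : j < l.length), i < j ∧ l[i] = l[j] := by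
        rcases lt_or_gt_of_ne (Fin.val_ne_of_ne hne) with hlt | hgt
        · exact ⟨a.1, b.1, a.2, b.2, hlt, by simpa [List.get_eq_getElem] using hab⟩
        · exact ⟨b.1, a.1, b.2, a.2, hgt, by simpa [List.get_eq_getElem] using hab.symm⟩
      set l' : List V := l.take (i+1) ++ l.drop (j+1) with hl'
      have hlen' : l'.length = (i+1) + (l.length - (j+1)) := by
        simp [hl', List.length_take]
        omega
      have hlast_take : (l.take (i+1)).getLast? = some (l[i]'hilen) := by
        rw [List.getLast?_eq_getElem?, List.length_take]
        have : (i + 1) ⊓ l.length - 1 = i := by omega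
        rw [this, List.getElem?_take, if_pos (by omega), List.getElem?_eq_getElem hilen]
      have hhd_drop : (l.drop (j+1)).head? = l[j+1]? := by
        rw [List.head?_eq_getElem?, List.getElem?_drop]
      have hch' : l'.Chain' R := by
        unfold List.Chain' at hch ⊢
        rw [hl', List.isChain_append]
        refine ⟨hch.take _, hch.drop _, ?_⟩
        intro p hp q hq
        rw [hlast_take, Option.mem_def, Option.some.injEq] at hp
        subst hp
        rw [hhd_drop, Option.mem_def] at hq
        have hj1 : j + 1 < l.length := by
          by_contra hcon
          rw [List.getElem?_eq_none (by omega)] at hq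
          simp at hq
        rw [List.getElem?_eq_getElem hj1, Option.some.injEq] at hq
        subst hq
        rw [hgij]
        have := List.isChain_iff_getElem.mp hch j (by omega)
        simpa [List.get_eq_getElem] using this
      have hhd' : l'.head? = some x := by
        rw [List.head?_eq_getElem?, hl', List.getElem?_append, if_pos (by
          rw [List.length_take]; omega), List.getElem?_take, if_pos (by omega)]
        rw [List.head?_eq_getElem?] at hhd
        exact hhd
      have hlast' : l'.getLast? = some y := by
        rw [List.getLast?_eq_getElem?] at hlast ⊢
        rcases Nat.lt_or_ge (j+1) l.length with hj1 | hj1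
        · rw [hlen', hl', List.getElem?_append, if_neg (by rw [List.length_take]; omega),
            List.getElem?_drop, List.length_take]
          have : j + 1 + (i + 1 + (l.length - (j + 1)) - 1 - ((i+1) ⊓ l.length)) =
              l.length - 1 := by omega
          rw [this]
          exact hlast
        · have hdrop : l.drop (j+1) = [] := by
            rw [List.drop_eq_nil_iff]
            omega
          have hj : j = l.length - 1 := by omega
          subst hj
          rw [hl', hdrop, List.append_nil, List.length_take]
          have h1 : (i + 1) ⊓ l.length - 1 = i := by omega
          rw [h1, List.getElem?_take, if_pos (by omega), List.getElem?_eq_getElem hilen, hgij]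
          rw [List.getElem?_eq_getElem (by omega : l.length - 1 < l.length)] at hlast
          exact hlast
      have hlenlt : l'.length ≤ n := by
        rw [hlen']
        omega
      obtain ⟨p, hp1, hp2, hp3, hp4, hp5⟩ := ih l' hlenlt hch' hhd' hlast'
      refine ⟨p, hp1, hp2, hp3, hp4, fun v hv => ?_⟩
      rcases List.mem_append.mp (hl' ▸ hp5 v hv) with h | h
      · exact List.take_subset _ _ h
      · exact List.drop_subset _ _ h

lemma exists_path_of_walk {x y : V} (l : List V) (hch : l.Chain' R)
    (hhd : l.head? = some x) (hlast : l.getLast? = some y) :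
    ∃ p : List V, p.Nodup ∧ p.Chain' R ∧ p.head? = some x ∧ p.getLast? = some y ∧
      ∀ v ∈ p, v ∈ l :=
  exists_path_of_walk_aux l.length l le_rfl hch hhd hlast

end Dedup
section Cycles
variable {D : V → V → Prop} {X : Set V}

lemma getElem_congr_idx' {l : List V} {a b : ℕ} (h : a = b) (hb : b < l.length) :
    l[a]'(h ▸ hb) = l[b]'hb := by subst h; rfl

lemma mod_succ_eq (a n : ℕ) : ((a % n) + 1) % n = (a + 1) % n := by
  conv_rhs => rw [Nat.add_mod]
  conv_lhs => rw [Nat.add_mod, Nat.mod_mod_of_dvd _ dvd_rfl]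

lemma cycle_arc {vs : List V} (hc : IsDicycle D vs) (hX : ∀ v ∈ vs, v ∈ X)
    {i : ℕ} (h : i < vs.length) :
    inducedRel D X (vs[i]) (vs[(i+1) % vs.length]'(Nat.mod_lt _ (by omega))) := by
  have hlen : (cycleArcs vs).length = vs.length := by
    simp [cycleArcs, List.length_zip, List.length_rotate]
  have harc : (cycleArcs vs)[i]'(by omega) ∈ cycleArcs vs := List.getElem_mem _
  have hval : (cycleArcs vs)[i]'(by omega) =
      (vs[i], vs[(i+1) % vs.length]'(Nat.mod_lt _ (by omega))) := by
    unfold cycleArcs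
    rw [List.getElem_zip]
    congr 1
    have := List.get_rotate vs 1 ⟨i, by rw [List.length_rotate]; omega⟩
    simpa [List.get_eq_getElem] using this
  have := hc.2.2 _ harc
  rw [hval] at this
  exact ⟨this, hX _ (List.getElem_mem h),
    hX _ (List.getElem_mem (Nat.mod_lt _ (by omega)))⟩

lemma cycle_reach {vs : List V} (hc : IsDicycle D vs) (hX : ∀ v ∈ vs, v ∈ X) :
    ∀ u ∈ vs, ∀ w ∈ vs, Relation.ReflTransGen (inducedRel D X) u w := by
  have hn : 0 < vs.length := List.length_pos_iff.mpr hc.1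
  have key : ∀ (k i : ℕ) (h : i < vs.length),
      Relation.ReflTransGen (inducedRel D X) (vs[i])
        (vs[(i+k) % vs.length]'(Nat.mod_lt _ (by omega))) := by
    intro k
    induction k with
    | zero =>
      intro i h
      have h0 : (i + 0) % vs.length = i := by rw [Nat.add_zero, Nat.mod_eq_of_lt h]
      rw [getElem_congr_idx' h0 h]
    | succ k ih =>
      intro i h
      refine Relation.ReflTransGen.tail (ih i h) ?_
      have harc := cycle_arc hc hX (Nat.mod_lt (i+k) (y := vs.length) (by omega))
      have heq : ((i + k) % vs.length + 1) % vs.length = (i + (k+1)) % vs.length := by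
        rw [mod_succ_eq, Nat.add_assoc]
      rw [getElem_congr_idx' heq (Nat.mod_lt _ (by omega))] at harc
      exact harc
  intro u hu w hw
  obtain ⟨iu, hiu, rfl⟩ := List.getElem_of_mem hu
  obtain ⟨iw, hiw, rfl⟩ := List.getElem_of_mem hw
  have hkey := key (vs.length + iw - iu) iu hiu
  have heq : (iu + (vs.length + iw - iu)) % vs.length = iw := by
    have h1 : iu + (vs.length + iw - iu) = iw + vs.length := by omega
    rw [h1, Nat.add_mod_right]
    exact Nat.mod_eq_of_lt hiw
  rw [getElem_congr_idx' heq hiw] at hkey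
  exact hkey
end Cycles

section Components
variable {D : V → V → Prop}

/-- The strong component of `v` in `D[X]`. -/
def rcomp (D : V → V → Prop) (X : Set V) (v : V) : Set V :=
  {u | u ∈ X ∧ Relation.ReflTransGen (inducedRel D X) v u ∧
    Relation.ReflTransGen (inducedRel D X) u v}

lemma rcomp_subset {X : Set V} {v : V} : rcomp D X v ⊆ X := fun _ hu => hu.1

lemma mem_rcomp_self {X : Set V} {v : V} (hv : v ∈ X) : v ∈ rcomp D X v :=
  ⟨hv, Relation.ReflTransGen.refl, Relation.ReflTransGen.refl⟩

lemma mem_of_rcomp_nonempty {X : Set V} {v : V} (h : (rcomp D X v).Nonempty) : v ∈ X := by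
  obtain ⟨u, huX, hvu, huv⟩ := h
  rcases Relation.ReflTransGen.cases_head hvu with rfl | ⟨c, hc, -⟩
  · exact huX
  · exact hc.2.1

lemma rcomp_claim {X : Set V} {v u z : V}
    (hzv : Relation.ReflTransGen (inducedRel D X) z v)
    (huz : Relation.ReflTransGen (inducedRel D X) u z) (hu : u ∈ rcomp D X v) :
    Relation.ReflTransGen (inducedRel D (rcomp D X v)) u z := by
  revert hu
  induction huz using Relation.ReflTransGen.head_induction_on with
  | refl => exact fun _ => Relation.ReflTransGen.refl
  | head hac hcz ih =>
    rename_i a c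
    intro ha
    have hc' : c ∈ rcomp D X v := ⟨hac.2.2, ha.2.1.tail hac, hcz.trans hzv⟩
    exact Relation.ReflTransGen.head ⟨hac.1, ha, hc'⟩ (ih hc')

lemma rcomp_scc {X : Set V} {v : V} : StronglyConnectedOn D (rcomp D X v) := by
  intro u hu w hw
  exact rcomp_claim hw.2.2 (hu.2.2.trans hw.2.1) hu

lemma rcomp_eq {X : Set V} {v u : V} (hu : u ∈ rcomp D X v) : rcomp D X u = rcomp D X v := by
  ext w
  constructor
  · rintro ⟨hwX, huw, hwu⟩
    exact ⟨hwX, hu.2.1.trans huw, hwu.trans hu.2.2⟩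
  · rintro ⟨hwX, hvw, hwv⟩
    exact ⟨hwX, hu.2.2.trans hvw, hwv.trans hu.2.1⟩
end Components
section Compose
variable {D : V → V → Prop} {Z1 Z2 : Set (V × V)}

lemma decode_eq {K a b x y : ℕ} (ha : a ≤ 1) (hb : b ≤ 1) (hx : x < K) (hy : y < K)
    (h : a * K + x = b * K + y) : a = b ∧ x = y := by
  interval_cases a <;> interval_cases b <;> omega

lemma rtg_mono_f {X : Set V} {f : V → ℕ}
    (hdec : ∀ u w, inducedRel D X u w → f w ≤ f u) {a b : V}
    (h : Relation.ReflTransGen (inducedRel D X) a b) : f b ≤ f a := by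
  induction h with
  | refl => exact le_refl _
  | tail _ hr ih => exact le_trans (hdec _ _ hr) ih

/-- Composition along levels: parity + within-level colorings. -/
lemma level_coloring {T : Set V} {f : V → ℕ} {K : ℕ} (hK : 1 ≤ K)
    (hstep : ∀ u v, u ∈ T → v ∈ T → D u v → f v ≤ f u + 1)
    (hcol : ∀ j : ℕ, ∃ c : V → Fin K,
      ∀ i, NoUnbCycle D Z1 Z2 ((T ∩ f ⁻¹' {j}) ∩ {v | c v = i})) :
    2 * K ∈ muSet D Z1 Z2 T := by
  choose cs hcs using hcol
  have hmod : ∀ v : V, f v % 2 ≤ 1 := fun v => by omega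
  refine ⟨fun v => ⟨(f v % 2) * K + (cs (f v) v).1, by
    have h1 := (cs (f v) v).2
    have h2 := hmod v
    have : (f v % 2) * K ≤ 1 * K := Nat.mul_le_mul_right K h2
    omega⟩, ?_⟩
  intro i vs hcyc hmem
  set c : V → Fin (2*K) := fun v => ⟨(f v % 2) * K + (cs (f v) v).1, by
    have h1 := (cs (f v) v).2
    have h2 := hmod v
    have : (f v % 2) * K ≤ 1 * K := Nat.mul_le_mul_right K h2
    omega⟩ with hc
  set X : Set V := T ∩ {v | c v = i} with hX
  have hmemX : ∀ v ∈ vs, v ∈ X := hmem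
  obtain ⟨v₀, hv₀⟩ := List.exists_mem_of_ne_nil vs hcyc.1
  -- equal colors give equal parity and equal fine color
  have hdecode : ∀ u w : V, c u = c w →
      f u % 2 = f w % 2 ∧ (cs (f u) u).1 = (cs (f w) w).1 := by
    intro u w huw
    have := congrArg Fin.val huw
    simp only [hc] at this
    exact decode_eq (hmod u) (hmod w) (cs (f u) u).2 (cs (f w) w).2 this
  have hdec : ∀ u w, inducedRel D X u w → f w ≤ f u := by
    rintro u w ⟨hD, hu, hw⟩
    have hpar := (hdecode u w ((hu.2).trans (hw.2).symm)).1
    have := hstep u w hu.1 hw.1 hD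
    omega
  have hreach := cycle_reach hcyc hmemX
  have hconst : ∀ u ∈ vs, f u = f v₀ := by
    intro u hu
    have h1 := rtg_mono_f hdec (hreach v₀ hv₀ u hu)
    have h2 := rtg_mono_f hdec (hreach u hu v₀ hv₀)
    omega
  set j := f v₀ with hj
  set i₂ := cs j v₀ with hi₂
  refine hcs j i₂ vs hcyc ?_
  intro u hu
  have huX := hmemX u hu
  have hfu : f u = j := hconst u hu
  refine ⟨⟨huX.1, hfu⟩, ?_⟩
  have := (hdecode u v₀ ((huX.2).trans ((hmemX v₀ hv₀).2).symm)).2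
  rw [hfu] at this
  exact Fin.ext this

/-- Composition along strong components. -/
lemma comp_coloring {M : Set V} {K : ℕ} (hK : 1 ≤ K)
    (hcomp : ∀ v ∈ M, ∃ c : V → Fin K,
      ∀ i, NoUnbCycle D Z1 Z2 (rcomp D M v ∩ {u | c u = i})) :
    K ∈ muSet D Z1 Z2 M := by
  classical
  set G : Set V → V → Fin K := fun A =>
    if h : ∃ c : V → Fin K, ∀ i, NoUnbCycle D Z1 Z2 (A ∩ {u | c u = i})
    then h.choose else fun _ => ⟨0, hK⟩ with hG
  refine ⟨fun v => G (rcomp D M v) v, ?_⟩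
  intro i vs hcyc hmem
  obtain ⟨v₀, hv₀⟩ := List.exists_mem_of_ne_nil vs hcyc.1
  have hv₀M : v₀ ∈ M := (hmem v₀ hv₀).1
  set X : Set V := M ∩ {v | G (rcomp D M v) v = i} with hX
  have hreach := cycle_reach hcyc hmem
  have hmono : ∀ a b : V, inducedRel D X a b → inducedRel D M a b :=
    fun a b ⟨h1, h2, h3⟩ => ⟨h1, h2.1, h3.1⟩
  have hin : ∀ u ∈ vs, u ∈ rcomp D M v₀ := by
    intro u hu
    exact ⟨(hmem u hu).1, Relation.ReflTransGen.mono hmono _ _ (hreach v₀ hv₀ u hu),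
      Relation.ReflTransGen.mono hmono _ _ (hreach u hu v₀ hv₀)⟩
  have hex := hcomp v₀ hv₀M
  have hGdef : G (rcomp D M v₀) = hex.choose := by
    rw [hG]
    exact dif_pos hex
  refine hex.choose_spec (G (rcomp D M v₀) v₀) vs hcyc ?_
  intro u hu
  refine ⟨hin u hu, ?_⟩
  have hcu : G (rcomp D M u) u = i := (hmem u hu).2
  have hceq : rcomp D M u = rcomp D M v₀ := rcomp_eq (hin u hu)
  have hcv : G (rcomp D M v₀) v₀ = i := (hmem v₀ hv₀).2
  show hex.choose u = G (rcomp D M v₀) v₀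
  rw [← hGdef, ← hceq, hcu, hceq, hcv]

end Compose
section PathHelpers
variable {D : V → V → Prop} {S' B : Set V}

lemma chain'_mem {l : List V} {a : V} (hch : l.Chain' (inducedRel D S'))
    (hhd : l.head? = some a) (ha : a ∈ S') : ∀ v ∈ l, v ∈ S' := by
  induction l generalizing a with
  | nil => simp
  | cons b t ih =>
    intro v hv
    rw [List.head?_cons, Option.some.injEq] at hhd
    subst hhd
    rcases List.mem_cons.mp hv with rfl | hv
    · exact ha
    · cases t with
      | nil => simp at hv
      | cons b' t' =>
        have hrel : inducedRel D S' b b' := (List.isChain_cons_cons.mp hch).1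
        exact ih (List.isChain_cons_cons.mp hch).2 rfl hrel.2.2 v hv

lemma chain'_restrict {l : List V} (hch : l.Chain' (inducedRel D S'))
    (hmem : ∀ v ∈ l, v ∈ B) : l.Chain' (inducedRel D B) := by
  unfold List.Chain' at hch ⊢
  rw [List.isChain_iff_getElem] at hch ⊢
  intro i h
  have := hch i h
  exact ⟨this.1, hmem _ (List.getElem_mem _), hmem _ (List.getElem_mem _)⟩

lemma nodup_tail_ne_head {p : List V} {x : V} (hnd : p.Nodup) (hhd : p.head? = some x) :
    ∀ v ∈ p.tail, v ≠ x := by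
  cases p with
  | nil => simp
  | cons a t =>
    rw [List.head?_cons, Option.some.injEq] at hhd
    subst hhd
    intro v hv
    rw [List.tail_cons] at hv
    exact fun h => (List.nodup_cons.mp hnd).1 (h ▸ hv)

lemma nodup_dropLast_ne_last {p : List V} {y : V} (hnd : p.Nodup) (hlast : p.getLast? = some y) :
    ∀ v ∈ p.dropLast, v ≠ y := by
  intro v hv heq
  subst heq
  have hne : p ≠ [] := by rintro rfl; simp at hlast
  have hy : p.getLast hne = v := by
    rw [List.getLast?_eq_getLast hne, Option.some.injEq] at hlast
    exact hlast
  rw [← List.dropLast_append_getLast hne] at hnd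
  rw [List.nodup_append] at hnd
  exact hnd.2.2 v hv v (by rw [hy]; exact List.mem_singleton_self _) rfl

lemma internal_mem {p : List V} {x y v : V} (hnd : p.Nodup) (hhd : p.head? = some x)
    (hlast : p.getLast? = some y) (hv : v ∈ internalVerts p) :
    v ∈ p ∧ v ≠ x ∧ v ≠ y := by
  unfold internalVerts at hv
  have hv1 : v ∈ p.tail := List.dropLast_subset _ hv
  have hv2 : v ∈ p := List.tail_subset _ hv1
  refine ⟨hv2, nodup_tail_ne_head hnd hhd v hv1, ?_⟩
  cases p with
  | nil => simp at hv
  | cons a t =>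
    rw [List.tail_cons] at hv
    have ht : t ≠ [] := by rintro rfl; simp at hv
    have hlast' : t.getLast? = some y := by
      rw [← hlast]
      cases t with
      | nil => exact absurd rfl ht
      | cons b t' => rw [List.getLast?_cons_cons]
    exact nodup_dropLast_ne_last (List.nodup_cons.mp hnd).2 hlast' v hv

end PathHelpers
section MainAux
variable {D : V → V → Prop} {Z1 Z2 : Set (V × V)}

lemma muSet_nonempty_all (hglob : (muSet D Z1 Z2 (Set.univ : Set V)).Nonempty)
    (A : Set V) : (muSet D Z1 Z2 A).Nonempty :=
  ⟨hglob.choose, muSet_anti (Set.subset_univ A) hglob.choose_spec⟩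

lemma aux_step [Fintype V] [Nonempty V]
    (hglob : (muSet D Z1 Z2 (Set.univ : Set V)).Nonempty)
    {S' : Set V} (hsc : StronglyConnectedOn D S') (hmu5 : 5 ≤ mu D Z1 Z2 S') :
    ∃ H : Set V, H ⊆ S' ∧ StronglyConnectedOn D H ∧
      mu D Z1 Z2 S' ≤ 4 * mu D Z1 Z2 H ∧
      ∀ X ⊆ H, ∀ x ∈ X, ∀ y ∈ X, x ≠ y →
        ∃ vs, IsXPath (inducedRel D (X ∪ (S' \ H))) X vs x y := by
  classical
  have hne := muSet_nonempty_all hglob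
  -- S' is nonempty
  obtain ⟨r, hr⟩ : S'.Nonempty := by
    rcases Set.eq_empty_or_nonempty S' with rfl | h
    · rw [mu_empty] at hmu5; omega
    · exact h
  set R := inducedRel D S' with hR
  have hreach : ∀ v ∈ S', Relation.ReflTransGen R r v := fun v hv => hsc r hr v hv
  have hback : ∀ v ∈ S', Relation.ReflTransGen R v r := fun v hv => hsc v hv r hr
  set fOut : V → ℕ := fun v => distFrom R r v with hfOut
  set fIn : V → ℕ := fun v => distTo R r v with hfIn
  -- Step 1: out-levels
  set J : Finset ℕ := Finset.univ.image fOut with hJ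
  set K₁ : ℕ := J.sup (fun j => mu D Z1 Z2 (S' ∩ fOut ⁻¹' {j})) with hK₁
  have hJne : J.Nonempty := ⟨fOut r, Finset.mem_image_of_mem _ (Finset.mem_univ r)⟩
  have hK₁pos : 1 ≤ K₁ := by
    have h1 : mu D Z1 Z2 (S' ∩ fOut ⁻¹' {fOut r}) ≤ K₁ := by
      rw [hK₁]; exact Finset.le_sup (f := fun j => mu D Z1 Z2 (S' ∩ fOut ⁻¹' {j})) (Finset.mem_image_of_mem _ (Finset.mem_univ r))
    have h2 := mu_pos (hne (S' ∩ fOut ⁻¹' {fOut r}))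
    omega
  have hcol₁ : ∀ j : ℕ, mu D Z1 Z2 (S' ∩ fOut ⁻¹' {j}) ≤ K₁ := by
    intro j
    rcases Set.eq_empty_or_nonempty (S' ∩ fOut ⁻¹' {j}) with he | ⟨v, hv⟩
    · rw [he, mu_empty]; exact hK₁pos
    · have : j ∈ J := by
        rw [hJ, Finset.mem_image]
        exact ⟨v, Finset.mem_univ v, hv.2⟩
      rw [hK₁]; exact Finset.le_sup (f := fun j => mu D Z1 Z2 (S' ∩ fOut ⁻¹' {j})) this
  have hstep₁ : ∀ u v, u ∈ S' → v ∈ S' → D u v → fOut v ≤ fOut u + 1 :=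
    fun u v hu hv hD => distFrom_step (hreach u hu) ⟨hD, hu, hv⟩
  have hmuS' : mu D Z1 Z2 S' ≤ 2 * K₁ := by
    refine mu_le (level_coloring hK₁pos hstep₁ ?_)
    exact fun j => exists_coloring (hne _) (hcol₁ j)
  obtain ⟨j₁, hj₁J, hK₁eq⟩ := Finset.exists_mem_eq_sup J hJne
    (fun j => mu D Z1 Z2 (S' ∩ fOut ⁻¹' {j}))
  set L : Set V := S' ∩ fOut ⁻¹' {j₁} with hL
  have hmuL : mu D Z1 Z2 S' ≤ 2 * mu D Z1 Z2 L := by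
    rw [hL, ← hK₁eq]; exact hmuS'
  have hLS' : L ⊆ S' := Set.inter_subset_left
  -- Step 2: in-levels within L
  set N : ℕ := Finset.univ.sup fIn with hN
  have hfInN : ∀ v : V, fIn v ≤ N := fun v => Finset.le_sup (Finset.mem_univ v)
  set g : V → ℕ := fun v => N - fIn v with hg
  set K₂ : ℕ := (Finset.range (N+1)).sup (fun j => mu D Z1 Z2 (L ∩ g ⁻¹' {j})) with hK₂
  have hK₂pos : 1 ≤ K₂ := by
    have h1 : mu D Z1 Z2 (L ∩ g ⁻¹' {0}) ≤ K₂ := by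
      rw [hK₂]; exact Finset.le_sup (f := fun j => mu D Z1 Z2 (L ∩ g ⁻¹' {j})) (Finset.mem_range.mpr (Nat.succ_pos N))
    have h2 := mu_pos (hne (L ∩ g ⁻¹' {0}))
    omega
  have hcol₂ : ∀ j : ℕ, mu D Z1 Z2 (L ∩ g ⁻¹' {j}) ≤ K₂ := by
    intro j
    rcases Nat.lt_or_ge j (N+1) with hj | hj
    · rw [hK₂]; exact Finset.le_sup (f := fun j => mu D Z1 Z2 (L ∩ g ⁻¹' {j})) (Finset.mem_range.mpr hj)
    · have he : L ∩ g ⁻¹' {j} = ∅ := by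
        ext v
        simp only [Set.mem_inter_iff, Set.mem_preimage, Set.mem_singleton_iff,
          Set.mem_empty_iff_false, iff_false, not_and]
        intro _
        have := hfInN v
        rw [hg]
        simp only
        omega
      rw [he, mu_empty]; exact hK₂pos
  have hstep₂ : ∀ u v, u ∈ L → v ∈ L → D u v → g v ≤ g u + 1 := by
    intro u v hu hv hD
    have h1 : fIn u ≤ fIn v + 1 := distTo_step (hback v (hLS' hv)) ⟨hD, hLS' hu, hLS' hv⟩
    have h2 := hfInN u
    have h3 := hfInN v
    rw [hg]
    simp only
    omega
  have hmuL2 : mu D Z1 Z2 L ≤ 2 * K₂ := by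
    refine mu_le (level_coloring hK₂pos hstep₂ ?_)
    exact fun j => exists_coloring (hne _) (hcol₂ j)
  obtain ⟨j₂, hj₂r, hK₂eq⟩ := Finset.exists_mem_eq_sup (Finset.range (N+1))
    ⟨0, Finset.mem_range.mpr (by omega)⟩ (fun j => mu D Z1 Z2 (L ∩ g ⁻¹' {j}))
  set M : Set V := L ∩ g ⁻¹' {j₂} with hM
  have hmuM : mu D Z1 Z2 S' ≤ 4 * mu D Z1 Z2 M := by
    have : mu D Z1 Z2 L ≤ 2 * mu D Z1 Z2 M := by rw [hM, ← hK₂eq]; exact hmuL2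
    omega
  have hMS' : M ⊆ S' := fun v hv => hLS' hv.1
  have hmuM2 : 2 ≤ mu D Z1 Z2 M := by omega
  -- characterization of members of M
  have hMfOut : ∀ v ∈ M, fOut v = j₁ := fun v hv => hv.1.2
  have hMfIn : ∀ v ∈ M, fIn v = N - j₂ := by
    intro v hv
    have h1 : g v = j₂ := hv.2
    have h2 := hfInN v
    rw [hg] at h1
    simp only at h1
    rw [Finset.mem_range] at hj₂r
    omega
  -- Step 3: strong components of M
  set K₃ : ℕ := Finset.univ.sup (fun v => mu D Z1 Z2 (rcomp D M v)) with hK₃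
  have hK₃pos : 1 ≤ K₃ := by
    have h1 : mu D Z1 Z2 (rcomp D M r) ≤ K₃ := by
      rw [hK₃]; exact Finset.le_sup (f := fun v => mu D Z1 Z2 (rcomp D M v)) (Finset.mem_univ r)
    have h2 := mu_pos (hne (rcomp D M r))
    omega
  have hmuMK₃ : mu D Z1 Z2 M ≤ K₃ := by
    refine mu_le (comp_coloring hK₃pos ?_)
    intro v _
    refine exists_coloring (hne _) ?_
    rw [hK₃]; exact Finset.le_sup (f := fun v => mu D Z1 Z2 (rcomp D M v)) (Finset.mem_univ v)
  obtain ⟨w, -, hweq⟩ := Finset.exists_mem_eq_sup (Finset.univ : Finset V)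
    Finset.univ_nonempty (fun v => mu D Z1 Z2 (rcomp D M v))
  set H : Set V := rcomp D M w with hH
  have hmuH : mu D Z1 Z2 M ≤ mu D Z1 Z2 H := by rw [hH, ← hweq]; exact hmuMK₃
  have hHM : H ⊆ M := rcomp_subset
  have hHS' : H ⊆ S' := fun v hv => hMS' (hHM hv)
  have hHscc : StronglyConnectedOn D H := rcomp_scc
  refine ⟨H, hHS', hHscc, by omega, ?_⟩
  -- Step 4: the X-path property
  intro X hXH x hx y hy hxy
  have hxH : x ∈ H := hXH hx
  have hyH : y ∈ H := hXH hy
  have hxM : x ∈ M := hHM hxH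
  have hyM : y ∈ M := hHM hyH
  have hxS' : x ∈ S' := hMS' hxM
  have hyS' : y ∈ S' := hMS' hyM
  set q : ℕ := N - j₂ with hq
  have hq1 : 1 ≤ q := by
    by_contra hcon
    have h1 : fIn x = 0 := by have := hMfIn x hxM; omega
    have h2 : fIn y = 0 := by have := hMfIn y hyM; omega
    have hx0 : x = r := distTo_eq_zero h1 (hback x hxS')
    have hy0 : y = r := distTo_eq_zero h2 (hback y hyS')
    exact hxy (hx0.trans hy0.symm)
  have hj₁1 : 1 ≤ j₁ := by
    by_contra hcon
    have h1 : fOut x = 0 := by have := hMfOut x hxM; omega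
    have h2 : fOut y = 0 := by have := hMfOut y hyM; omega
    have hx0 : r = x := distFrom_eq_zero h1 (hreach x hxS')
    have hy0 : r = y := distFrom_eq_zero h2 (hreach y hyS')
    exact hxy (hx0.symm.trans hy0)
  -- the two walks
  obtain ⟨l₁, hl₁ne, hl₁ch, hl₁hd, hl₁last, hl₁mem⟩ := exists_walk_to (hback x hxS')
  obtain ⟨l₂, hl₂ne, hl₂ch, hl₂hd, hl₂last, hl₂mem⟩ := exists_walk_from (hreach y hyS')
  -- vertices of the walks are in S'
  have hl₁S' : ∀ v ∈ l₁, v ∈ S' := chain'_mem hl₁ch hl₁hd hxS'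
  have hl₂S' : ∀ v ∈ l₂, v ∈ S' := chain'_mem hl₂ch hl₂hd hr
  -- the tail of l₂
  have ht₂ne : l₂.tail ≠ [] := by
    intro hnil
    obtain ⟨a, t, rfl⟩ := List.exists_cons_of_ne_nil hl₂ne
    rw [List.tail_cons] at hnil
    subst hnil
    have ha : a = r := by simpa using hl₂hd
    have hay : a = y := by simpa using hl₂last
    have h0 : fOut y = 0 := by rw [← hay, ha]; exact distFrom_self r
    have := hMfOut y hyM
    omega
  set wlk : List V := l₁ ++ l₂.tail with hwlk
  have hwch : wlk.Chain' R := by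
    unfold List.Chain' at hl₁ch hl₂ch ⊢
    rw [hwlk, List.isChain_append]
    obtain ⟨a, t, rfl⟩ := List.exists_cons_of_ne_nil hl₂ne
    have ha : a = r := by simpa using hl₂hd
    refine ⟨hl₁ch, (List.isChain_cons.mp hl₂ch).2, ?_⟩
    intro c hc b hb
    rw [hl₁last, Option.mem_def, Option.some.injEq] at hc
    subst hc
    rw [← ha]
    exact (List.isChain_cons.mp hl₂ch).1 b hb
  have hwhd : wlk.head? = some x := by
    rw [hwlk, List.head?_append_of_ne_nil _ hl₁ne]
    exact hl₁hd
  have hwlast : wlk.getLast? = some y := by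
    rw [hwlk, List.getLast?_append_of_ne_nil _ ht₂ne]
    rw [← hl₂last]
    obtain ⟨a, t, rfl⟩ := List.exists_cons_of_ne_nil hl₂ne
    rw [List.tail_cons] at ht₂ne ⊢
    cases t with
    | nil => exact absurd rfl ht₂ne
    | cons b t' => rw [List.getLast?_cons_cons]
  -- classification of walk vertices
  have hclass : ∀ v ∈ wlk, v = x ∨ v = y ∨ (v ∈ S' ∧ v ∉ H) := by
    intro v hv
    rcases List.mem_append.mp (hwlk ▸ hv) with hv1 | hv2
    · rcases hl₁mem v hv1 with rfl | hlt
      · exact Or.inl rfl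
      · refine Or.inr (Or.inr ⟨hl₁S' v hv1, fun hvH => ?_⟩)
        have h1 : fIn v = q := hMfIn v (hHM hvH)
        have h2 : fIn x = q := hMfIn x hxM
        have h3 : fIn v = distTo R r v := rfl
        have h4 : fIn x = distTo R r x := rfl
        omega
    · have hv2' : v ∈ l₂ := List.tail_subset _ hv2
      rcases hl₂mem v hv2' with rfl | hlt
      · exact Or.inr (Or.inl rfl)
      · refine Or.inr (Or.inr ⟨hl₂S' v hv2', fun hvH => ?_⟩)
        have h1 : fOut v = j₁ := hMfOut v (hHM hvH)
        have h2 : fOut y = j₁ := hMfOut y hyM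
        have h3 : fOut v = distFrom R r v := rfl
        have h4 : fOut y = distFrom R r y := rfl
        omega
  -- extract a path
  obtain ⟨p, hpnd, hpch, hphd, hplast, hpmem⟩ := exists_path_of_walk wlk hwch hwhd hwlast
  set B : Set V := X ∪ (S' \ H) with hB
  have hpB : ∀ v ∈ p, v ∈ B := by
    intro v hv
    rcases hclass v (hpmem v hv) with rfl | rfl | ⟨hvS, hvH⟩
    · exact Or.inl hx
    · exact Or.inl hy
    · exact Or.inr ⟨hvS, hvH⟩
  refine ⟨p, ⟨⟨hpnd, chain'_restrict hpch hpB⟩, hphd, hplast⟩, hx, hy, hxy, ?_⟩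
  intro v hv hvX
  obtain ⟨hvp, hvx, hvy⟩ := internal_mem hpnd hphd hplast hv
  rcases hclass v (hpmem v hvp) with rfl | rfl | ⟨hvS, hvH⟩
  · exact hvx rfl
  · exact hvy rfl
  · exact hvH (hXH hvX)

end MainAux
/-- If `D` is strongly connected and `μ(D,Z₁,Z₂) ≥ 2^(2m+1)`, there is a
chain `V(D) = S₀ ⊇ S₁ ⊇ ⋯ ⊇ S_m` such that for every `i ∈ [m]`: `D[S i]` is strongly
connected, `μ(D[S i],Z₁,Z₂) ≥ μ(D,Z₁,Z₂)/4^i`, and any two distinct vertices of `S m` are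
joined by a directed `S m`-path inside `D[S m ∪ (S (i-1) \ S i)]`. -/
theorem stmt8 [Fintype V] (m : ℕ) (hm : 1 ≤ m) (D : V → V → Prop) (Z1 Z2 : Set (V × V))
    (hsc : StronglyConnectedOn D Set.univ)
    (hmu : 2 ^ (2 * m + 1) ≤ mu D Z1 Z2 Set.univ) :
    ∃ S : ℕ → Set V, S 0 = Set.univ ∧
      (∀ i, 1 ≤ i → i ≤ m → S i ⊆ S (i - 1)) ∧
      ∀ i, 1 ≤ i → i ≤ m →
        StronglyConnectedOn D (S i) ∧
        mu D Z1 Z2 Set.univ ≤ 4 ^ i * mu D Z1 Z2 (S i) ∧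
        ∀ x ∈ S m, ∀ y ∈ S m, x ≠ y →
          ∃ vs : List V,
            IsXPath (inducedRel D (S m ∪ (S (i - 1) \ S i))) (S m) vs x y := by
  classical
  have hpow : 0 < 2 ^ (2*m+1) := Nat.pow_pos (by norm_num)
  have hglob : (muSet D Z1 Z2 (Set.univ : Set V)).Nonempty := by
    by_contra h
    rw [Set.not_nonempty_iff_eq_empty] at h
    have h0 : mu D Z1 Z2 Set.univ = 0 := by rw [mu_eq, h, Nat.sInf_empty]
    omega
  have hV : Nonempty V := by
    by_contra hV
    rw [not_nonempty_iff] at hV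
    have h0 : (0 : ℕ) ∈ muSet D Z1 Z2 (Set.univ : Set V) := by
      refine ⟨fun v => isEmptyElim v, fun i => i.elim0⟩
    have := mu_le h0
    omega
  set step : Set V → Set V := fun X =>
    if h : StronglyConnectedOn D X ∧ 5 ≤ mu D Z1 Z2 X
    then (aux_step hglob h.1 h.2).choose else X with hstepdef
  set S : ℕ → Set V := fun n => step^[n] Set.univ with hSdef
  have hS0 : S 0 = Set.univ := rfl
  have hSsucc : ∀ n, S (n+1) = step (S n) := fun n =>
    Function.iterate_succ_apply' step n Set.univ
  have main : ∀ n, n ≤ m →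
      StronglyConnectedOn D (S n) ∧
      mu D Z1 Z2 Set.univ ≤ 4^n * mu D Z1 Z2 (S n) ∧
      (∀ k, 1 ≤ k → k ≤ n → S k ⊆ S (k-1) ∧
        ∀ X ⊆ S k, ∀ x ∈ X, ∀ y ∈ X, x ≠ y →
          ∃ vs, IsXPath (inducedRel D (X ∪ (S (k-1) \ S k))) X vs x y) := by
    intro n
    induction n with
    | zero =>
      intro _
      refine ⟨hsc, ?_, ?_⟩
      · rw [pow_zero, one_mul, hS0]
      · intro k hk1 hk2; omega
    | succ n ih =>
      intro hn1
      obtain ⟨hscn, hmun, hprev⟩ := ih (by omega)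
      have h4n : (4:ℕ)^n = 2^(2*n) := by rw [pow_mul]; norm_num
      have h5 : 5 ≤ mu D Z1 Z2 (S n) := by
        have hbound : (2:ℕ)^(2*n+3) ≤ 2^(2*m+1) :=
          Nat.pow_le_pow_right (by norm_num) (by omega)
        have hchain2 : 2^(2*n) * 8 ≤ 2^(2*n) * mu D Z1 Z2 (S n) := by
          calc (2:ℕ)^(2*n)*8 = 2^(2*n+3) := by rw [pow_add]; norm_num
            _ ≤ 2^(2*m+1) := hbound
            _ ≤ mu D Z1 Z2 Set.univ := hmu
            _ ≤ 4^n * mu D Z1 Z2 (S n) := hmun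
            _ = 2^(2*n) * mu D Z1 Z2 (S n) := by rw [h4n]
        have := Nat.le_of_mul_le_mul_left hchain2 (Nat.pow_pos (by norm_num))
        omega
      have hcond : StronglyConnectedOn D (S n) ∧ 5 ≤ mu D Z1 Z2 (S n) := ⟨hscn, h5⟩
      have hSn1 : S (n+1) = (aux_step hglob hcond.1 hcond.2).choose := by
        rw [hSsucc, hstepdef]
        exact dif_pos hcond
      obtain ⟨hH1, hH2, hH3, hH4⟩ := (aux_step hglob hcond.1 hcond.2).choose_spec
      rw [← hSn1] at hH1 hH2 hH3 hH4
      refine ⟨hH2, ?_, ?_⟩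
      · calc mu D Z1 Z2 Set.univ ≤ 4^n * mu D Z1 Z2 (S n) := hmun
          _ ≤ 4^n * (4 * mu D Z1 Z2 (S (n+1))) := Nat.mul_le_mul_left _ hH3
          _ = 4^(n+1) * mu D Z1 Z2 (S (n+1)) := by ring
      · intro k hk1 hk2
        rcases Nat.lt_or_ge k (n+1) with hk | hk
        · exact hprev k hk1 (by omega)
        · have hkn : k = n+1 := by omega
          subst hkn
          have hsimp : (n+1) - 1 = n := rfl
          rw [hsimp]
          exact ⟨hH1, hH4⟩
  have hchainlem := (main m le_rfl).2.2
  have hsub : ∀ i, i ≤ m → S m ⊆ S i := by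
    intro i him
    have haux : ∀ d, i + d ≤ m → S (i + d) ⊆ S i := by
      intro d
      induction d with
      | zero => intro _; exact subset_rfl
      | succ d ihd =>
        intro hdm
        have h1 : S (i+d+1) ⊆ S (i+d) := by
          have := (hchainlem (i+d+1) (by omega) (by omega)).1
          simpa using this
        exact h1.trans (ihd (by omega))
    have hfin := haux (m - i) (by omega)
    rwa [Nat.add_sub_cancel' him] at hfin
  refine ⟨S, hS0, ?_, ?_⟩
  · intro i h1 h2
    exact (hchainlem i h1 h2).1
  · intro i h1 h2
    refine ⟨(main i h2).1, (main i h2).2.1, ?_⟩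
    intro x hx y hy hxy
    exact (hchainlem i h1 h2).2 (S m) (hsub i h2) x hx y hy hxy
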